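/- arXiv:2408.09155 — 3 statements merged into one kernel-verified Lean document; each statement's English description precedes it below -/
import Mathlib

section
/- Let δ > 0 and define the doubled smoothed ramp loss L : ℝ → ℝ by L(u) = 0 for u ≤ −δ, L(u) = (1 + u/δ)² for −δ < u ≤ 0, L(u) = 2 − (1 − u/δ)² for 0 < u < δ, and L(u) = 2 for u ≥ δ; define sign(t) = 1 if t ≥ 0 and sign(t) = −1 if t < 0. Let (Ω, ℱ, P) be a probability space, 𝒳 a measurable space, X : Ω → 𝒳 measurable, A : Ω → {−1, 1} a random variable, Y : Ω → ℝ a random variable with 0 ≤ Y ≤ h almost surely for some h > 0, and Δ : Ω → {0, 1} a random variable. Let π : {−1,1} × 𝒳 → ℝ be measurable with η ≤ π(a, x) ≤ 1 for all (a, x) and some η > 0, such that for each a ∈ {−1, 1}, ω ↦ π(a, X(ω)) is a version of P(A = a ∣ σ(X)). Let S̃ : ℝ × 𝒳 × {−1,1} → ℝ be measurable with η_C ≤ S̃ ≤ 1 for some η_C > 0, and fix τ ∈ ℝ. Define V²_L(f, c) = E[−(Δ·max(0, c(τ − Y) + 1)/S̃(Y, X, A)) · L(A·f(X))/π(A, X)]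 and V²(d, c) = E[−(Δ·max(0, c(τ − Y) + 1)/S̃(Y, X, A)) · 1{A = d(X)}/π(A, X)]. Suppose a measurable f̃ : 𝒳 → ℝ and c̃ ≥ 0 satisfy V²_L(f̃, c̃) ≥ V²_L(f, c) for every measurable f and every c ≥ 0. Then for every measurable f : 𝒳 → ℝ and every c ≥ 0, sup over measurable f′ : 𝒳 → ℝ and c′ ≥ 0 of V²(sign∘f′, c′), minus V²(sign∘f, c), is at most V²_L(f̃, c̃) − V²_L(f, c). -/
open MeasureTheory

/-- The doubled smoothed ramp loss: `L(u) = 0` for `u ≤ -δ`, `(1+u/δ)²` for `-δ < u ≤ 0`,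
`2 - (1-u/δ)²` for `0 < u < δ`, and `2` for `u ≥ δ`. -/
noncomputable def rampL (δ u : ℝ) : ℝ :=
  if u ≤ -δ then 0
  else if u ≤ 0 then (1 + u / δ) ^ 2
  else if u < δ then 2 - (1 - u / δ) ^ 2
  else 2

/-- `sgn t = 1` if `t ≥ 0` and `-1` if `t < 0`. -/
noncomputable def sgn (t : ℝ) : ℝ := if 0 ≤ t then 1 else -1

noncomputable def rampLinv (δ v : ℝ) : ℝ :=
  if v ≤ 1 then δ * (Real.sqrt v - 1) else δ * (1 - Real.sqrt (2 - v))

lemma measurable_rampL (δ : ℝ) : Measurable (rampL δ) := by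
  unfold rampL
  refine Measurable.ite (measurableSet_le measurable_id measurable_const) measurable_const ?_
  refine Measurable.ite (measurableSet_le measurable_id measurable_const)
    ((measurable_const.add (measurable_id.div_const δ)).pow_const 2) ?_
  exact Measurable.ite (measurableSet_lt measurable_id measurable_const)
    (measurable_const.sub ((measurable_const.sub (measurable_id.div_const δ)).pow_const 2))
    measurable_const

lemma measurable_rampLinv (δ : ℝ) : Measurable (rampLinv δ) := by
  unfold rampLinv
  refine Measurable.ite (measurableSet_le measurable_id measurable_const)
    (measurable_const.mul (Real.continuous_sqrt.measurable.sub measurable_const))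
    (measurable_const.mul (measurable_const.sub
      (Real.continuous_sqrt.measurable.comp (measurable_const.sub measurable_id))))

lemma measurable_sgn : Measurable sgn := by
  unfold sgn
  exact Measurable.ite (measurableSet_le measurable_const measurable_id)
    measurable_const measurable_const

lemma rampL_of_le {δ u : ℝ} (h : u ≤ -δ) : rampL δ u = 0 := by
  unfold rampL; rw [if_pos h]

lemma rampL_of_nonpos {δ u : ℝ} (h1 : -δ < u) (h2 : u ≤ 0) :
    rampL δ u = (1 + u / δ) ^ 2 := by
  unfold rampL; rw [if_neg (by linarith), if_pos h2]

lemma rampL_of_pos {δ u : ℝ} (hδ : 0 < δ) (h2 : 0 < u) (h3 : u < δ) :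
    rampL δ u = 2 - (1 - u / δ) ^ 2 := by
  unfold rampL; rw [if_neg (by linarith), if_neg (by linarith), if_pos h3]

lemma rampL_of_ge {δ u : ℝ} (hδ : 0 < δ) (h : δ ≤ u) : rampL δ u = 2 := by
  unfold rampL; rw [if_neg (by linarith), if_neg (by linarith), if_neg (by linarith)]

lemma rampL_nonneg {δ : ℝ} (hδ : 0 < δ) (u : ℝ) : 0 ≤ rampL δ u := by
  unfold rampL
  split_ifs with h1 h2 h3
  · exact le_refl 0
  · positivity
  · push_neg at h1 h2
    have ha : u / δ < 1 := (div_lt_one hδ).mpr h3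
    have hb : 0 < u / δ := div_pos h2 hδ
    nlinarith
  · norm_num

lemma rampL_le_two {δ : ℝ} (hδ : 0 < δ) (u : ℝ) : rampL δ u ≤ 2 := by
  unfold rampL
  split_ifs with h1 h2 h3
  · norm_num
  · push_neg at h1
    have ha : -1 < u / δ := by rw [lt_div_iff₀ hδ]; linarith
    have hb : u / δ ≤ 0 := by rw [div_le_iff₀ hδ]; linarith
    nlinarith
  · nlinarith [sq_nonneg (1 - u / δ)]
  · exact le_refl 2

lemma rampL_one_le {δ : ℝ} (hδ : 0 < δ) {u : ℝ} (hu : 0 ≤ u) : 1 ≤ rampL δ u := by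
  unfold rampL
  split_ifs with h1 h2 h3
  · linarith
  · have : u = 0 := le_antisymm h2 hu
    simp [this]
  · push_neg at h2
    have ha : u / δ < 1 := (div_lt_one hδ).mpr h3
    have hb : 0 < u / δ := div_pos h2 hδ
    nlinarith
  · norm_num

lemma rampL_neg {δ : ℝ} (hδ : 0 < δ) (u : ℝ) : rampL δ (-u) = 2 - rampL δ u := by
  rcases le_or_gt u (-δ) with h1 | h1
  · rw [rampL_of_le h1, rampL_of_ge hδ (by linarith)]
    ring
  · rcases le_or_gt u 0 with h2 | h2
    · rcases eq_or_lt_of_le h2 with rfl | h2'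
      · rw [neg_zero, rampL_of_nonpos (by linarith) le_rfl]
        norm_num
      · rw [rampL_of_nonpos h1 h2, rampL_of_pos hδ (by linarith) (by linarith)]
        rw [neg_div]
        ring
    · rcases lt_or_ge u δ with h3 | h3
      · rw [rampL_of_pos hδ h2 h3, rampL_of_nonpos (by linarith) (by linarith)]
        rw [neg_div]
        ring
      · rw [rampL_of_ge hδ h3, rampL_of_le (by linarith)]
        ring

lemma rampL_rampLinv {δ : ℝ} (hδ : 0 < δ) {v : ℝ} (h0 : 0 ≤ v) (h2 : v ≤ 2) :
    rampL δ (rampLinv δ v) = v := by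
  unfold rampLinv
  rcases le_or_gt v 1 with hv | hv
  · rw [if_pos hv]
    have hs0 : 0 ≤ Real.sqrt v := Real.sqrt_nonneg v
    have hs1 : Real.sqrt v ≤ 1 := by
      rw [show (1:ℝ) = Real.sqrt 1 by simp]
      exact Real.sqrt_le_sqrt hv
    have hsq : Real.sqrt v ^ 2 = v := Real.sq_sqrt h0
    rcases eq_or_lt_of_le h0 with rfl | h0'
    · simp only [Real.sqrt_zero]
      rw [rampL_of_le (by nlinarith)]
    · have hsp : 0 < Real.sqrt v := Real.sqrt_pos.mpr h0'
      rw [rampL_of_nonpos (by nlinarith) (by nlinarith)]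
      rw [mul_div_cancel_left₀ _ hδ.ne']
      nlinarith
  · rw [if_neg (not_le.mpr hv)]
    have h2v : 0 ≤ 2 - v := by linarith
    have hs0 : 0 ≤ Real.sqrt (2 - v) := Real.sqrt_nonneg _
    have hs1 : Real.sqrt (2 - v) ≤ 1 := by
      rw [show (1:ℝ) = Real.sqrt 1 by simp]
      exact Real.sqrt_le_sqrt (by linarith)
    have hsq : Real.sqrt (2 - v) ^ 2 = 2 - v := Real.sq_sqrt h2v
    rcases eq_or_lt_of_le h2 with rfl | h2'
    · simp only [sub_self, Real.sqrt_zero]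
      rw [rampL_of_ge hδ (by nlinarith)]
    · have hsp : 0 < Real.sqrt (2 - v) := Real.sqrt_pos.mpr (by linarith)
      rw [rampL_of_pos hδ (by nlinarith) (by nlinarith)]
      rw [mul_div_cancel_left₀ _ hδ.ne']
      nlinarith


lemma sgn_of_nonneg {t : ℝ} (ht : 0 ≤ t) : sgn t = 1 := by unfold sgn; rw [if_pos ht]

lemma sgn_of_neg {t : ℝ} (ht : t < 0) : sgn t = -1 := by
  unfold sgn; rw [if_neg (not_le.mpr ht)]

lemma rampL_delta_sgn {δ : ℝ} (hδ : 0 < δ) {a : ℝ} (ha : a = 1 ∨ a = -1) (t : ℝ) :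
    rampL δ (a * (δ * sgn t)) = 2 * (if a = sgn t then 1 else 0) := by
  rcases ha with rfl | rfl <;> rcases le_or_gt 0 t with ht | ht
  · rw [sgn_of_nonneg ht, if_pos rfl, show (1:ℝ) * (δ * 1) = δ by ring,
      rampL_of_ge hδ le_rfl]
    norm_num
  · rw [sgn_of_neg ht, if_neg (by norm_num), show (1:ℝ) * (δ * -1) = -δ by ring,
      rampL_of_le le_rfl]
    norm_num
  · rw [sgn_of_nonneg ht, if_neg (by norm_num), show (-1:ℝ) * (δ * 1) = -δ by ring,
      rampL_of_le le_rfl]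
    norm_num
  · rw [sgn_of_neg ht, if_pos rfl, show (-1:ℝ) * (δ * -1) = δ by ring,
      rampL_of_ge hδ le_rfl]
    norm_num

lemma rampL_key {δ : ℝ} (hδ : 0 < δ) {a : ℝ} (ha : a = 1 ∨ a = -1) (t : ℝ) :
    rampL δ (a * rampLinv δ (2 * (rampL δ t - if 0 ≤ t then 1 else 0)))
      = 2 * (rampL δ (a * t) - if a = sgn t then 1 else 0) := by
  have hLt2 : rampL δ t ≤ 2 := rampL_le_two hδ t
  have hLt0 : 0 ≤ rampL δ t := rampL_nonneg hδ t
  have hneg : rampL δ (-t) = 2 - rampL δ t := rampL_neg hδ t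
  rcases ha with rfl | rfl <;> rcases le_or_gt 0 t with ht | ht
  · have hone : 1 ≤ rampL δ t := rampL_one_le hδ ht
    rw [one_mul, one_mul, if_pos ht, sgn_of_nonneg ht, if_pos rfl]
    exact rampL_rampLinv hδ (by linarith) (by linarith)
  · have hone : 1 ≤ rampL δ (-t) := rampL_one_le hδ (by linarith)
    rw [one_mul, one_mul, if_neg (not_le.mpr ht), sgn_of_neg ht, if_neg (by norm_num)]
    exact rampL_rampLinv hδ (by linarith) (by linarith)
  · have hone : 1 ≤ rampL δ t := rampL_one_le hδ ht
    rw [neg_one_mul, neg_one_mul, if_pos ht, sgn_of_nonneg ht, if_neg (by norm_num),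
      rampL_neg hδ, rampL_neg hδ,
      rampL_rampLinv hδ (by linarith : (0:ℝ) ≤ 2 * (rampL δ t - 1)) (by linarith)]
    ring
  · have hone : 1 ≤ rampL δ (-t) := rampL_one_le hδ (by linarith)
    rw [neg_one_mul, neg_one_mul, if_neg (not_le.mpr ht), sgn_of_neg ht, if_pos rfl,
      rampL_neg hδ, rampL_neg hδ,
      rampL_rampLinv hδ (by linarith : (0:ℝ) ≤ 2 * (rampL δ t - 0)) (by linarith)]
    ring

/-- Surrogate buffered-criterion value
`V²_L(f, c) = E[-(Δ·max(0, c(τ-Y)+1)/S̃(Y,X,A)) · L(A f(X)) / π(A,X)]`. -/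
noncomputable def VLbuf {Ω 𝒳 : Type*} [MeasurableSpace Ω] [MeasurableSpace 𝒳]
    (P : Measure Ω) (X : Ω → 𝒳) (A Y Δc : Ω → ℝ) (S : ℝ × 𝒳 × ℝ → ℝ) (π : ℝ × 𝒳 → ℝ)
    (τ δ : ℝ) (f : 𝒳 → ℝ) (c : ℝ) : ℝ :=
  ∫ ω, -(Δc ω * max 0 (c * (τ - Y ω) + 1) / S (Y ω, X ω, A ω))
      * rampL δ (A ω * f (X ω)) / π (A ω, X ω) ∂P

/-- Buffered-criterion value
`V²(d, c) = E[-(Δ·max(0, c(τ-Y)+1)/S̃(Y,X,A)) · 1{A = d(X)} / π(A,X)]`. -/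
noncomputable def Vbuf {Ω 𝒳 : Type*} [MeasurableSpace Ω] [MeasurableSpace 𝒳]
    (P : Measure Ω) (X : Ω → 𝒳) (A Y Δc : Ω → ℝ) (S : ℝ × 𝒳 × ℝ → ℝ) (π : ℝ × 𝒳 → ℝ)
    (τ : ℝ) (d : 𝒳 → ℝ) (c : ℝ) : ℝ :=
  ∫ ω, -(Δc ω * max 0 (c * (τ - Y ω) + 1) / S (Y ω, X ω, A ω))
      * (if A ω = d (X ω) then (1 : ℝ) else 0) / π (A ω, X ω) ∂P

/-- Theorem 5 of the paper: excess-risk bound for the buffered criterion. If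
`(f̃, c̃)` with `c̃ ≥ 0` maximizes the surrogate value `V²_L` over measurable `f` and `c ≥ 0`,
then for every measurable `f` and `c ≥ 0`, the supremum over measurable `f'` and `c' ≥ 0` of
`V²(sign ∘ f', c')`, minus `V²(sign ∘ f, c)`, is at most `V²_L(f̃, c̃) - V²_L(f, c)`;
equivalently, for all measurable `f'` and `c' ≥ 0`,
`V²(sign∘f', c') - V²(sign∘f, c) ≤ V²_L(f̃, c̃) - V²_L(f, c)`. -/
theorem stmt_10 {Ω 𝒳 : Type*} [MeasurableSpace Ω] [MeasurableSpace 𝒳]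
    (P : Measure Ω) [IsProbabilityMeasure P]
    (X : Ω → 𝒳) (hX : Measurable X)
    (A : Ω → ℝ) (hA : Measurable A) (hAval : ∀ ω, A ω = 1 ∨ A ω = -1)
    (Y : Ω → ℝ) (hY : Measurable Y)
    (h : ℝ) (hh : 0 < h) (hYb : ∀ᵐ ω ∂P, 0 ≤ Y ω ∧ Y ω ≤ h)
    (Δc : Ω → ℝ) (hΔm : Measurable Δc) (hΔval : ∀ ω, Δc ω = 0 ∨ Δc ω = 1)
    (π : ℝ × 𝒳 → ℝ) (hπ : Measurable π) (η : ℝ) (hη : 0 < η)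
    (hπb : ∀ a x, η ≤ π (a, x) ∧ π (a, x) ≤ 1)
    (hπver : ∀ a : ℝ, (a = 1 ∨ a = -1) →
      (fun ω => π (a, X ω)) =ᵐ[P]
        P[fun ω => if A ω = a then (1 : ℝ) else 0 |
          MeasurableSpace.comap X inferInstance])
    (S : ℝ × 𝒳 × ℝ → ℝ) (hS : Measurable S) (ηC : ℝ) (hηC : 0 < ηC)
    (hSb : ∀ t x a, ηC ≤ S (t, x, a) ∧ S (t, x, a) ≤ 1)
    (τ : ℝ) (δ : ℝ) (hδ : 0 < δ)
    (ftilde : 𝒳 → ℝ) (hftilde : Measurable ftilde) (ctilde : ℝ) (hctilde : 0 ≤ ctilde)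
    (hopt : ∀ f : 𝒳 → ℝ, Measurable f → ∀ c : ℝ, 0 ≤ c →
      VLbuf P X A Y Δc S π τ δ f c ≤ VLbuf P X A Y Δc S π τ δ ftilde ctilde) :
    ∀ f : 𝒳 → ℝ, Measurable f → ∀ c : ℝ, 0 ≤ c →
    ∀ f' : 𝒳 → ℝ, Measurable f' → ∀ c' : ℝ, 0 ≤ c' →
      Vbuf P X A Y Δc S π τ (fun x => sgn (f' x)) c'
          - Vbuf P X A Y Δc S π τ (fun x => sgn (f x)) c
        ≤ VLbuf P X A Y Δc S π τ δ ftilde ctilde - VLbuf P X A Y Δc S π τ δ f c := by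
  intro f hf c hc f' hf' c' hc'
  -- integrability of all integrands
  have hInt : ∀ G : Ω → ℝ, Measurable G → (∀ ω, |G ω| ≤ 2) → ∀ c₀ : ℝ, 0 ≤ c₀ →
      Integrable (fun ω => -(Δc ω * max 0 (c₀ * (τ - Y ω) + 1) / S (Y ω, X ω, A ω))
        * G ω / π (A ω, X ω)) P := by
    intro G hG hGb c₀ hc₀
    have hK0 : (0:ℝ) ≤ c₀ * (|τ| + h) + 1 := by nlinarith [abs_nonneg τ, hh.le]
    have hmeas : Measurable (fun ω => -(Δc ω * max 0 (c₀ * (τ - Y ω) + 1)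
        / S (Y ω, X ω, A ω)) * G ω / π (A ω, X ω)) := by
      refine Measurable.div (Measurable.mul (Measurable.neg (Measurable.div ?_ ?_)) hG) ?_
      · exact hΔm.mul (measurable_const.max
          ((measurable_const.mul (measurable_const.sub hY)).add measurable_const))
      · exact hS.comp (hY.prodMk (hX.prodMk hA))
      · exact hπ.comp (hA.prodMk hX)
    refine Integrable.mono' (integrable_const ((c₀ * (|τ| + h) + 1) / ηC * 2 / η))
      hmeas.aestronglyMeasurable ?_
    filter_upwards [hYb] with ω hYω
    obtain ⟨hY0, hYh⟩ := hYω
    have hπ1 := (hπb (A ω) (X ω)).1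
    have hS1 := (hSb (Y ω) (X ω) (A ω)).1
    have hM0 : (0:ℝ) ≤ max 0 (c₀ * (τ - Y ω) + 1) := le_max_left _ _
    have hMK : max 0 (c₀ * (τ - Y ω) + 1) ≤ c₀ * (|τ| + h) + 1 := by
      apply max_le hK0
      have h1 : τ - Y ω ≤ |τ| + h := by
        have := le_abs_self τ; linarith
      nlinarith
    have hΔ0 : 0 ≤ Δc ω := by rcases hΔval ω with h1 | h1 <;> rw [h1] <;> norm_num
    have hΔ1 : Δc ω ≤ 1 := by rcases hΔval ω with h1 | h1 <;> rw [h1] <;> norm_num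
    have hT0 : 0 ≤ Δc ω * max 0 (c₀ * (τ - Y ω) + 1) / S (Y ω, X ω, A ω) :=
      div_nonneg (mul_nonneg hΔ0 hM0) (by linarith)
    have hTK : Δc ω * max 0 (c₀ * (τ - Y ω) + 1) / S (Y ω, X ω, A ω)
        ≤ (c₀ * (|τ| + h) + 1) / ηC := by
      apply div_le_div₀ hK0 ?_ hηC (by linarith)
      nlinarith
    rw [Real.norm_eq_abs, abs_div, abs_mul, abs_neg, abs_of_nonneg hT0,
      abs_of_nonneg (by linarith : (0:ℝ) ≤ π (A ω, X ω))]
    apply div_le_div₀ (by positivity) ?_ hη hπ1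
    have hG2 := hGb ω
    nlinarith [abs_nonneg (G ω)]
  -- the two auxiliary integrable integrands
  have h1 : Integrable (fun ω => -(Δc ω * max 0 (c * (τ - Y ω) + 1) / S (Y ω, X ω, A ω))
      * rampL δ (A ω * f (X ω)) / π (A ω, X ω)) P := by
    refine hInt (fun ω => rampL δ (A ω * f (X ω)))
      ((measurable_rampL δ).comp (hA.mul (hf.comp hX))) (fun ω => ?_) c hc
    rw [abs_of_nonneg (rampL_nonneg hδ _)]
    exact rampL_le_two hδ _
  have h2 : Integrable (fun ω => -(Δc ω * max 0 (c * (τ - Y ω) + 1) / S (Y ω, X ω, A ω))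
      * (if A ω = sgn (f (X ω)) then (1:ℝ) else 0) / π (A ω, X ω)) P := by
    refine hInt (fun ω => if A ω = sgn (f (X ω)) then (1:ℝ) else 0) ?_ (fun ω => ?_) c hc
    · exact Measurable.ite (measurableSet_eq_fun hA (measurable_sgn.comp (hf.comp hX)))
        measurable_const measurable_const
    · show |(if A ω = sgn (f (X ω)) then (1:ℝ) else 0)| ≤ 2
      split_ifs <;> norm_num
  -- step B : VL(δ·sgn∘f', c') = 2 V(sgn∘f', c')
  have hB : VLbuf P X A Y Δc S π τ δ (fun x => δ * sgn (f' x)) c'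
      = 2 * Vbuf P X A Y Δc S π τ (fun x => sgn (f' x)) c' := by
    unfold VLbuf Vbuf
    rw [← integral_const_mul]
    refine integral_congr_ae (Filter.Eventually.of_forall fun ω => ?_)
    simp only
    rw [rampL_delta_sgn hδ (hAval ω) (f' (X ω))]
    ring
  -- step C : VL(g₃, c) = 2 (VL(f,c) - V(sgn∘f, c))
  have hC : VLbuf P X A Y Δc S π τ δ
        (fun x => rampLinv δ (2 * (rampL δ (f x) - if 0 ≤ f x then 1 else 0))) c
      = 2 * (VLbuf P X A Y Δc S π τ δ f c
          - Vbuf P X A Y Δc S π τ (fun x => sgn (f x)) c) := by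
    unfold VLbuf Vbuf
    rw [← integral_sub h1 h2, ← integral_const_mul]
    refine integral_congr_ae (Filter.Eventually.of_forall fun ω => ?_)
    simp only
    rw [rampL_key hδ (hAval ω) (f (X ω))]
    ring
  have hg2 : Measurable (fun x => δ * sgn (f' x)) :=
    measurable_const.mul (measurable_sgn.comp hf')
  have hg3 : Measurable (fun x => rampLinv δ
      (2 * (rampL δ (f x) - if 0 ≤ f x then 1 else 0))) := by
    refine (measurable_rampLinv δ).comp (measurable_const.mul
      (((measurable_rampL δ).comp hf).sub ?_))
    exact Measurable.ite (measurableSet_le measurable_const hf)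
      measurable_const measurable_const
  have hB2 := hopt _ hg2 c' hc'
  have hC2 := hopt _ hg3 c hc
  rw [hB] at hB2
  rw [hC] at hC2
  linarith
end

section
/- Let n ≥ 1, let Y₁, …, Y_n ∈ ℝ, let w₁, …, w_n ≥ 0, and let τ ∈ ℝ. Suppose there exists i with Yᵢ < τ and wᵢ > 0. Define hfun : [0, ∞) → ℝ by hfun(c) = (1/n)·Σᵢ wᵢ·max(0, c(τ − Yᵢ) + 1). Then hfun attains its infimum over [0, ∞), and the infimum is attained either at c = 0 or at some point c = 1/(Y_j − τ) with Y_j > τ. -/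
/-- the convex piecewise affine function
`hfun(c) = (1/n) Σᵢ wᵢ max(0, c(τ - Yᵢ) + 1)` on `[0, ∞)`, with `wᵢ ≥ 0` and some `i`
satisfying `Yᵢ < τ` and `wᵢ > 0`, attains its infimum over `[0, ∞)`, and the infimum is
attained either at `c = 0` or at some point `c = 1/(Y_j - τ)` with `Y_j > τ`. -/
theorem stmt_14 (n : ℕ) (hn : 1 ≤ n) (Y w : Fin n → ℝ) (hw : ∀ i, 0 ≤ w i) (τ : ℝ)
    (hex : ∃ i, Y i < τ ∧ 0 < w i)
    (hfun : ℝ → ℝ)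
    (hdef : ∀ c : ℝ, hfun c = (1 / (n : ℝ)) * ∑ i, w i * max 0 (c * (τ - Y i) + 1)) :
    ∃ c₀ ∈ Set.Ici (0 : ℝ), (∀ c ∈ Set.Ici (0 : ℝ), hfun c₀ ≤ hfun c) ∧
      (c₀ = 0 ∨ ∃ j : Fin n, τ < Y j ∧ c₀ = 1 / (Y j - τ)) := by
  classical
  have hninv : (0:ℝ) ≤ 1 / (n:ℝ) := by positivity
  set S : Finset ℝ :=
    insert (0:ℝ) ((Finset.univ.filter fun j : Fin n => τ < Y j).image fun j => 1 / (Y j - τ))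
    with hS
  have hSmem : ∀ x : ℝ, x ∈ S ↔ x = 0 ∨ ∃ j, τ < Y j ∧ x = 1 / (Y j - τ) := by
    intro x
    simp only [hS, Finset.mem_insert, Finset.mem_image, Finset.mem_filter, Finset.mem_univ,
      true_and]
    constructor
    · rintro (rfl | ⟨j, hj, rfl⟩)
      · exact Or.inl rfl
      · exact Or.inr ⟨j, hj, rfl⟩
    · rintro (rfl | ⟨j, hj, rfl⟩)
      · exact Or.inl rfl
      · exact Or.inr ⟨j, hj, rfl⟩
  have hSne : S.Nonempty := ⟨0, (hSmem 0).2 (Or.inl rfl)⟩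
  have hSnonneg : ∀ x ∈ S, (0:ℝ) ≤ x := by
    intro x hx
    rcases (hSmem x).1 hx with rfl | ⟨j, hj, rfl⟩
    · exact le_refl 0
    · have : (0:ℝ) < Y j - τ := sub_pos.mpr hj
      positivity
  -- tail monotonicity: beyond all knots, hfun is nondecreasing
  have tail : ∀ x y : ℝ, 0 ≤ x → x ≤ y →
      (∀ j, τ < Y j → 1 / (Y j - τ) ≤ x) → hfun x ≤ hfun y := by
    intro x y hx hxy hknots
    rw [hdef, hdef]
    apply mul_le_mul_of_nonneg_left _ hninv
    apply Finset.sum_le_sum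
    intro i _
    apply mul_le_mul_of_nonneg_left _ (hw i)
    rcases le_or_gt (Y i) τ with h | h
    · have hτ : (0:ℝ) ≤ τ - Y i := sub_nonneg.mpr h
      exact max_le_max le_rfl (by nlinarith)
    · have hpos : (0:ℝ) < Y i - τ := sub_pos.mpr h
      have hk := hknots i h
      have h1 : x * (τ - Y i) + 1 ≤ 0 := by
        have h2 : 1 ≤ x * (Y i - τ) := by
          calc (1:ℝ) = (1 / (Y i - τ)) * (Y i - τ) := by field_simp
            _ ≤ x * (Y i - τ) := mul_le_mul_of_nonneg_right hk hpos.le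
        nlinarith
      have h2 : y * (τ - Y i) + 1 ≤ 0 := by nlinarith
      rw [max_eq_left h1, max_eq_left h2]
  -- interpolation: hfun is affine on knot-free segments
  have interp : ∀ a b t : ℝ, 0 ≤ a → a ≤ b → 0 ≤ t → t ≤ 1 →
      (∀ j, τ < Y j → 1 / (Y j - τ) ≤ a ∨ b ≤ 1 / (Y j - τ)) →
      hfun ((1 - t) * a + t * b) = (1 - t) * hfun a + t * hfun b := by
    intro a b t ha hab ht ht1 hkn
    set c := (1 - t) * a + t * b with hc
    have hc_ge_a : a ≤ c := by nlinarith
    have hc_le_b : c ≤ b := by nlinarith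
    have key : ∀ i : Fin n,
        max 0 (c * (τ - Y i) + 1)
          = (1 - t) * max 0 (a * (τ - Y i) + 1) + t * max 0 (b * (τ - Y i) + 1) := by
      intro i
      by_cases h : τ < Y i
      · have hpos : (0:ℝ) < Y i - τ := sub_pos.mpr h
        rcases hkn i h with hk | hk
        · have hle : ∀ x : ℝ, a ≤ x → x * (τ - Y i) + 1 ≤ 0 := by
            intro x hxa
            have h2 : 1 ≤ x * (Y i - τ) := by
              calc (1:ℝ) = (1 / (Y i - τ)) * (Y i - τ) := by field_simp
                _ ≤ a * (Y i - τ) := mul_le_mul_of_nonneg_right hk hpos.le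
                _ ≤ x * (Y i - τ) := mul_le_mul_of_nonneg_right hxa hpos.le
            nlinarith
          rw [max_eq_left (hle a le_rfl), max_eq_left (hle b hab),
            max_eq_left (hle c hc_ge_a)]
          ring
        · have hge : ∀ x : ℝ, x ≤ b → 0 ≤ x * (τ - Y i) + 1 := by
            intro x hxb
            have h2 : x * (Y i - τ) ≤ 1 := by
              calc x * (Y i - τ) ≤ b * (Y i - τ) := mul_le_mul_of_nonneg_right hxb hpos.le
                _ ≤ (1 / (Y i - τ)) * (Y i - τ) := mul_le_mul_of_nonneg_right hk hpos.le
                _ = 1 := by field_simp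
            nlinarith
          rw [max_eq_right (hge a (hab.trans le_rfl)), max_eq_right (hge b le_rfl),
            max_eq_right (hge c hc_le_b)]
          rw [hc]; ring
      · push_neg at h
        have hτ : (0:ℝ) ≤ τ - Y i := sub_nonneg.mpr h
        have hge : ∀ x : ℝ, 0 ≤ x → 0 ≤ x * (τ - Y i) + 1 := by
          intro x hx; nlinarith
        rw [max_eq_right (hge a ha), max_eq_right (hge b (ha.trans hab)),
          max_eq_right (hge c (ha.trans hc_ge_a))]
        rw [hc]; ring
    rw [hdef, hdef, hdef]
    calc (1 / (n:ℝ)) * ∑ i, w i * max 0 (c * (τ - Y i) + 1)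
        = (1 / (n:ℝ)) * ∑ i, ((1 - t) * (w i * max 0 (a * (τ - Y i) + 1))
            + t * (w i * max 0 (b * (τ - Y i) + 1))) := by
          congr 1
          apply Finset.sum_congr rfl
          intro i _
          rw [key i]; ring
      _ = (1 - t) * ((1 / (n:ℝ)) * ∑ i, w i * max 0 (a * (τ - Y i) + 1))
            + t * ((1 / (n:ℝ)) * ∑ i, w i * max 0 (b * (τ - Y i) + 1)) := by
          rw [Finset.sum_add_distrib, ← Finset.mul_sum, ← Finset.mul_sum]
          ring
  obtain ⟨c₀, hc₀S, hmin⟩ := S.exists_min_image hfun hSne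
  refine ⟨c₀, hSnonneg c₀ hc₀S, ?_, (hSmem c₀).1 hc₀S⟩
  intro c hc
  rw [Set.mem_Ici] at hc
  by_cases hcS : c ∈ S
  · exact hmin c hcS
  · set M := S.max' hSne with hM
    have hMS : M ∈ S := S.max'_mem hSne
    by_cases hcM : M ≤ c
    · have h1 : hfun M ≤ hfun c :=
        tail M c (hSnonneg M hMS) hcM
          (fun j hj => S.le_max' _ ((hSmem _).2 (Or.inr ⟨j, hj, rfl⟩)))
      exact (hmin M hMS).trans h1
    · push_neg at hcM
      set T₁ := S.filter (fun s => s ≤ c) with hT₁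
      set T₂ := S.filter (fun s => c ≤ s) with hT₂
      have hT₁ne : T₁.Nonempty :=
        ⟨0, Finset.mem_filter.2 ⟨(hSmem 0).2 (Or.inl rfl), hc⟩⟩
      have hT₂ne : T₂.Nonempty := ⟨M, Finset.mem_filter.2 ⟨hMS, hcM.le⟩⟩
      set a := T₁.max' hT₁ne with ha
      set b := T₂.min' hT₂ne with hb
      have haS : a ∈ S := (Finset.mem_filter.1 (T₁.max'_mem hT₁ne)).1
      have hbS : b ∈ S := (Finset.mem_filter.1 (T₂.min'_mem hT₂ne)).1
      have hac : a ≤ c := (Finset.mem_filter.1 (T₁.max'_mem hT₁ne)).2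
      have hcb : c ≤ b := (Finset.mem_filter.1 (T₂.min'_mem hT₂ne)).2
      have ha0 : 0 ≤ a := hSnonneg a haS
      have hcb' : c < b := lt_of_le_of_ne hcb (fun h => hcS (h ▸ hbS))
      have hab : a < b := lt_of_le_of_lt hac hcb'
      have hknots : ∀ j, τ < Y j → 1 / (Y j - τ) ≤ a ∨ b ≤ 1 / (Y j - τ) := by
        intro j hj
        have hkS : (1 / (Y j - τ)) ∈ S := (hSmem _).2 (Or.inr ⟨j, hj, rfl⟩)
        rcases le_total (1 / (Y j - τ)) c with h | h
        · exact Or.inl (T₁.le_max' _ (Finset.mem_filter.2 ⟨hkS, h⟩))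
        · exact Or.inr (T₂.min'_le _ (Finset.mem_filter.2 ⟨hkS, h⟩))
      set t := (c - a) / (b - a) with htdef
      have hba : (0:ℝ) < b - a := sub_pos.mpr hab
      have ht : 0 ≤ t := div_nonneg (sub_nonneg.2 hac) hba.le
      have ht1 : t ≤ 1 := (div_le_one hba).2 (by linarith)
      have hcomb : (1 - t) * a + t * b = c := by
        have hmul : t * (b - a) = c - a := div_mul_cancel₀ _ hba.ne'
        linear_combination hmul
      have hinterp := interp a b t ha0 hab.le ht ht1 hknots
      rw [hcomb] at hinterp
      rw [hinterp]
      have h1 := hmin a haS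
      have h2 := hmin b hbS
      nlinarith
end

section
/- Let T be an essentially bounded integrable random variable whose law is atomless. Suppose q ∈ ℝ is such that γ := P(T ≤ q) ∈ (0,1) and E[T·1{T ≤ q}] = τ·γ for some τ ∈ ℝ (i.e. the conditional expectation of T given the event {T ≤ q} equals τ). Then inf_{c ≥ 0} E[max(0, c(τ − T) + 1)] = γ; equivalently, 1 − inf_{c ≥ 0} E[max(0, c(τ − T) + 1)] = P(T > q). -/
/-!
For every `c`, integrating the hinge `max 0 (c (τ - T) + 1)` only over `A = {T ≤ q}` already
gives `γ`, because `∫_A T = τ γ` makes the `c`-term vanish; hence the infimum is at least `γ`.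
Since `T` has no atom at `q` and `P(A) > 0`, we get `τ < q`, and the slope `c = (q - τ)⁻¹`
makes the hinge equal to `c (q - T)⁺`, which vanishes off `A`, so the bound `γ` is attained.
-/

open MeasureTheory

section

variable {Ω : Type*} [MeasurableSpace Ω] {μ : Measure Ω}

theorem setIntegral_le_integral_max_zero {f : Ω → ℝ} (hf : Integrable f μ) (s : Set Ω) :
    ∫ ω in s, f ω ∂μ ≤ ∫ ω, max 0 (f ω) ∂μ := by
  have hpos : Integrable (fun ω => max 0 (f ω)) μ := by simpa [max_comm] using hf.pos_part
  calc ∫ ω in s, f ω ∂μ ≤ ∫ ω in s, max 0 (f ω) ∂μ :=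
        setIntegral_mono hf.integrableOn hpos.integrableOn fun ω => le_max_right _ _
    _ ≤ ∫ ω, max 0 (f ω) ∂μ :=
        setIntegral_le_integral hpos (Filter.Eventually.of_forall fun ω => le_max_left _ _)

theorem integral_max_zero_sub_eq_setIntegral {T : Ω → ℝ} (hTm : Measurable T) (q : ℝ) :
    ∫ ω, max 0 (q - T ω) ∂μ = ∫ ω in {ω | T ω ≤ q}, q - T ω ∂μ := by
  rw [← setIntegral_eq_integral_of_forall_compl_eq_zero (s := {ω | T ω ≤ q})
    fun ω hω => max_eq_left (sub_nonpos.2 (le_of_not_ge hω))]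
  exact setIntegral_congr_fun (hTm measurableSet_Iic) fun ω hω => max_eq_right (sub_nonneg.2 hω)

variable [IsFiniteMeasure μ]

theorem setIntegral_hinge_of_setIntegral_eq {T : Ω → ℝ} (hT : Integrable T μ) {s : Set Ω}
    {τ : ℝ} (hτ : ∫ ω in s, T ω ∂μ = τ * μ.real s) (c : ℝ) :
    ∫ ω in s, c * (τ - T ω) + 1 ∂μ = μ.real s := by
  have hconst : ∀ a : ℝ, IntegrableOn (fun _ => a) s μ := fun a => integrableOn_const
  have hsub : IntegrableOn (fun ω => τ - T ω) s μ := (hconst τ).sub hT.integrableOn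
  rw [integral_add (hsub.const_mul c) (hconst 1), integral_const_mul,
    integral_sub (hconst τ) hT.integrableOn, hτ]
  simp only [setIntegral_const, smul_eq_mul]
  ring

theorem measureReal_le_integral_hinge {T : Ω → ℝ} (hT : Integrable T μ) {s : Set Ω} {τ : ℝ}
    (hτ : ∫ ω in s, T ω ∂μ = τ * μ.real s) (c : ℝ) :
    μ.real s ≤ ∫ ω, max 0 (c * (τ - T ω) + 1) ∂μ := by
  rw [← setIntegral_hinge_of_setIntegral_eq hT hτ c]
  exact setIntegral_le_integral_max_zero
    ((((integrable_const τ).sub hT).const_mul c).add (integrable_const 1)) s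

theorem setIntegral_lt_mul_measureReal {T : Ω → ℝ} (hTm : Measurable T) (hT : Integrable T μ)
    {q : ℝ} (hq : μ {ω | T ω = q} = 0) (hpos : 0 < μ {ω | T ω ≤ q}) :
    ∫ ω in {ω | T ω ≤ q}, T ω ∂μ < q * μ.real {ω | T ω ≤ q} := by
  set A := {ω | T ω ≤ q}
  have hA : MeasurableSet A := hTm measurableSet_Iic
  have hconst : IntegrableOn (fun _ => q) A μ := integrableOn_const
  have hint : IntegrableOn (fun ω => q - T ω) A μ := hconst.sub hT.integrableOn
  have hnonneg : 0 ≤ᵐ[μ.restrict A] fun ω => q - T ω :=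
    (ae_restrict_mem hA).mono fun ω hω => sub_nonneg.2 hω
  have hsupp : Function.support (fun ω => q - T ω) ∩ A = A \ {ω | T ω = q} := by
    ext ω
    simp [A, sub_ne_zero, ne_comm, and_comm]
  have hgap : 0 < ∫ ω in A, q - T ω ∂μ := by
    rwa [setIntegral_pos_iff_support_of_nonneg_ae hnonneg hint, hsupp, measure_sdiff_null hq]
  rw [integral_sub hconst hT.integrableOn, setIntegral_const, smul_eq_mul] at hgap
  linarith

theorem integral_hinge_inv_sub_eq {T : Ω → ℝ} (hTm : Measurable T) (hT : Integrable T μ)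
    {q τ : ℝ} (hτ : ∫ ω in {ω | T ω ≤ q}, T ω ∂μ = τ * μ.real {ω | T ω ≤ q}) (hτq : τ < q) :
    ∫ ω, max 0 ((q - τ)⁻¹ * (τ - T ω) + 1) ∂μ = μ.real {ω | T ω ≤ q} := by
  have hgap : 0 < q - τ := sub_pos.2 hτq
  have hrescale : ∀ ω, max 0 ((q - τ)⁻¹ * (τ - T ω) + 1) = (q - τ)⁻¹ * max 0 (q - T ω) := by
    intro ω
    rw [mul_max_of_nonneg _ _ (inv_nonneg.2 hgap.le), mul_zero]
    congr 1
    field_simp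
    ring
  simp_rw [hrescale]
  have hconst : IntegrableOn (fun _ => q) {ω | T ω ≤ q} μ := integrableOn_const
  rw [integral_const_mul, integral_max_zero_sub_eq_setIntegral hTm,
    integral_sub hconst hT.integrableOn, setIntegral_const, smul_eq_mul, hτ]
  field_simp

end

theorem stmt_15_general {Ω : Type*} [MeasurableSpace Ω] (P : Measure Ω) [IsProbabilityMeasure P]
    (T : Ω → ℝ) (hTm : Measurable T) (hTint : Integrable T P)
    (hatomless : ∀ x : ℝ, P {ω | T ω = x} = 0)
    (q τ γ : ℝ) (hγdef : γ = (P {ω | T ω ≤ q}).toReal) (hγ : γ ∈ Set.Ioo (0 : ℝ) 1)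
    (hτ : ∫ ω, T ω * (if T ω ≤ q then (1 : ℝ) else 0) ∂P = τ * γ) :
    (⨅ c : Set.Ici (0 : ℝ), ∫ ω, max 0 ((c : ℝ) * (τ - T ω) + 1) ∂P) = γ ∧
    1 - (⨅ c : Set.Ici (0 : ℝ), ∫ ω, max 0 ((c : ℝ) * (τ - T ω) + 1) ∂P)
      = (P {ω | q < T ω}).toReal := by
  set A := {ω | T ω ≤ q}
  have hA : MeasurableSet A := hTm measurableSet_Iic
  rw [← measureReal_def] at hγdef
  have hτA : ∫ ω in A, T ω ∂P = τ * P.real A := by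
    rw [← hγdef, ← hτ, ← integral_indicator hA]
    congr 1 with ω
    by_cases h : T ω ≤ q <;> simp [A, h]
  have hτq : τ < q := by
    obtain ⟨hγpos, -⟩ := hγ
    have hpos : 0 < P A := pos_of_ne_zero fun h => by simp [hγdef, measureReal_def, h] at hγpos
    have := setIntegral_lt_mul_measureReal hTm hTint (hatomless q) hpos
    rw [hτA, ← hγdef] at this
    exact lt_of_mul_lt_mul_right this hγpos.le
  have hleast : IsLeast (Set.range fun c : Set.Ici (0 : ℝ) =>
      ∫ ω, max 0 ((c : ℝ) * (τ - T ω) + 1) ∂P) γ := by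
    refine ⟨⟨⟨(q - τ)⁻¹, inv_nonneg.2 (sub_pos.2 hτq).le⟩, ?_⟩, ?_⟩
    · rw [hγdef]; exact integral_hinge_inv_sub_eq hTm hTint hτA hτq
    · rintro _ ⟨c, rfl⟩
      rw [hγdef]; exact measureReal_le_integral_hinge hTint hτA c
  rw [hleast.isGLB.ciInf_eq, ← measureReal_def, hγdef, ← probReal_compl_eq_one_sub hA]
  exact ⟨rfl, congrArg P.real (by ext; simp [A])⟩

/-- Remark 1 of the paper: for an essentially bounded integrable random
variable `T` with atomless law, if `q` is such that `γ := P(T ≤ q) ∈ (0,1)` and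
`E[T·1{T ≤ q}] = τγ`, then `inf_{c ≥ 0} E[max(0, c(τ - T) + 1)] = γ`; equivalently,
`1 - inf_{c ≥ 0} E[max(0, c(τ - T) + 1)] = P(T > q)`. -/
theorem stmt_15 {Ω : Type*} [MeasurableSpace Ω] (P : Measure Ω) [IsProbabilityMeasure P]
    (T : Ω → ℝ) (hTm : Measurable T) (hTbdd : MemLp T ⊤ P) (hTint : Integrable T P)
    (hatomless : ∀ x : ℝ, P {ω | T ω = x} = 0)
    (q τ γ : ℝ) (hγdef : γ = (P {ω | T ω ≤ q}).toReal) (hγ : γ ∈ Set.Ioo (0 : ℝ) 1)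
    (hτ : ∫ ω, T ω * (if T ω ≤ q then (1 : ℝ) else 0) ∂P = τ * γ) :
    (⨅ c : Set.Ici (0 : ℝ), ∫ ω, max 0 ((c : ℝ) * (τ - T ω) + 1) ∂P) = γ ∧
    1 - (⨅ c : Set.Ici (0 : ℝ), ∫ ω, max 0 ((c : ℝ) * (τ - T ω) + 1) ∂P)
      = (P {ω | q < T ω}).toReal :=
  stmt_15_general P T hTm hTint hatomless q τ γ hγdef hγ hτ
end
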